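/- arXiv:2601.10274 — 4 statements merged into one kernel-verified Lean document; each statement's English description precedes it below -/
import Mathlib

section
/- The Hessian H of the mean waiting time E[W] = λE[S²]/(2(1−λE[S])) with respect to ℓ, where t_k(ℓ_k) = t_{0k} + c_k ℓ_k, E[S] = Σ π_k t_k(ℓ_k), E[S²] = Σ π_k t_k(ℓ_k)², is positive definite on the stability region {ℓ : λE[S(ℓ)] < 1}, provided c_k > 0, π_k > 0, t_{0k} > 0 for all k. Consequently E[W] is strictly convex in ℓ on this region. -/
open Finset


namespace Stmt2Aux

variable {N : ℕ}

noncomputable def Lam (r : Fin N → ℝ) : (Fin N → ℝ) →L[ℝ] ℝ :=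
  ∑ k, r k • ContinuousLinearMap.proj k

lemma Lam_apply (r : Fin N → ℝ) (y : Fin N → ℝ) : Lam r y = ∑ k, r k * y k := by
  simp [Lam]

lemma Lam_single (r : Fin N → ℝ) (j : Fin N) : Lam r (Pi.single j 1) = r j := by
  simp [Lam_apply, Pi.single_apply]

lemma hasFDerivAt_sum1 (f : Fin N → ℝ → ℝ) (f' : Fin N → ℝ) (x : Fin N → ℝ)
    (h : ∀ k, HasDerivAt (f k) (f' k) (x k)) :
    HasFDerivAt (fun y => ∑ k, f k (y k)) (Lam f') x := by
  have h2 : ∀ k : Fin N, HasFDerivAt (fun y : Fin N → ℝ => f k (y k))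
      ((f' k) • (ContinuousLinearMap.proj k : (Fin N → ℝ) →L[ℝ] ℝ)) x :=
    fun k => (h k).comp_hasFDerivAt x (hasFDerivAt_apply k x)
  exact HasFDerivAt.fun_sum (fun k _ => h2 k)

lemma hasFDerivAt_div' {E : Type*} [NormedAddCommGroup E] [NormedSpace ℝ E]
    {f g : E → ℝ} {f' g' : E →L[ℝ] ℝ} {x : E}
    (hf : HasFDerivAt f f' x) (hg : HasFDerivAt g g' x) (hx : g x ≠ 0) :
    HasFDerivAt (fun y => f y / g y) (((g x)^2)⁻¹ • ((g x) • f' - (f x) • g')) x := by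
  have hinv : HasFDerivAt (fun y => (g y)⁻¹) ((-(g x ^ 2)⁻¹) • g') x := by
    exact (hasDerivAt_inv hx).comp_hasFDerivAt x hg
  have hmul := hf.mul hinv
  have heq : (fun y => f y / g y) = fun y => f y * (g y)⁻¹ := by
    funext y; rw [div_eq_mul_inv]
  rw [heq]
  refine hmul.congr_fderiv ?_
  ext y
  simp only [ContinuousLinearMap.smul_apply, ContinuousLinearMap.sub_apply,
    ContinuousLinearMap.add_apply, smul_eq_mul]
  field_simp
  ring

section Defs
variable (lam : ℝ) (p c t0 : Fin N → ℝ)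

noncomputable def Uf (x : Fin N → ℝ) : ℝ := ∑ k, p k * (t0 k + c k * x k)
noncomputable def Vf (x : Fin N → ℝ) : ℝ := ∑ k, p k * (t0 k + c k * x k)^2
noncomputable def Mf (x : Fin N → ℝ) : ℝ := 2 * (1 - lam * Uf p c t0 x)
noncomputable def Fw (x : Fin N → ℝ) : ℝ := lam * Vf p c t0 x / Mf lam p c t0 x

/-- first partial derivative of Fw -/
noncomputable def Gf (j : Fin N) (x : Fin N → ℝ) : ℝ :=
  (Mf lam p c t0 x * (lam * (p j * (2 * (t0 j + c j * x j) * c j)))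
    + lam * Vf p c t0 x * (2 * lam * (p j * c j))) / (Mf lam p c t0 x)^2

end Defs

variable {lam : ℝ} {p c t0 : Fin N → ℝ}

lemma hasFDerivAt_Uf (x : Fin N → ℝ) :
    HasFDerivAt (Uf p c t0) (Lam (fun k => p k * c k)) x := by
  have h : ∀ k, HasDerivAt (fun s : ℝ => p k * (t0 k + c k * s)) (p k * c k) (x k) := by
    intro k
    have h1 : HasDerivAt (fun s : ℝ => t0 k + c k * s) (c k) (x k) := by
      simpa using ((hasDerivAt_id (x k)).const_mul (c k)).const_add (t0 k)
    exact h1.const_mul (p k)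
  exact hasFDerivAt_sum1 _ _ x h

lemma hasFDerivAt_Vf (x : Fin N → ℝ) :
    HasFDerivAt (Vf p c t0) (Lam (fun k => p k * (2 * (t0 k + c k * x k) * c k))) x := by
  have h : ∀ k, HasDerivAt (fun s : ℝ => p k * (t0 k + c k * s)^2)
      (p k * (2 * (t0 k + c k * x k) * c k)) (x k) := by
    intro k
    have h1 : HasDerivAt (fun s : ℝ => t0 k + c k * s) (c k) (x k) := by
      simpa using ((hasDerivAt_id (x k)).const_mul (c k)).const_add (t0 k)
    have h2 := (h1.pow 2).const_mul (p k)
    simpa [mul_assoc, mul_comm, mul_left_comm] using h2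
  exact hasFDerivAt_sum1 _ _ x h

lemma hasFDerivAt_Mf (x : Fin N → ℝ) :
    HasFDerivAt (Mf lam p c t0) (Lam (fun k => -(2 * lam) * (p k * c k))) x := by
  have h1 := (((hasFDerivAt_Uf (p := p) (c := c) (t0 := t0) x).const_mul lam).const_sub 1).const_mul 2
  refine h1.congr_fderiv ?_
  ext y
  simp only [Lam_apply, ContinuousLinearMap.smul_apply, ContinuousLinearMap.neg_apply,
    smul_eq_mul, mul_neg, Finset.mul_sum, ← Finset.sum_neg_distrib]
  refine Finset.sum_congr rfl fun k _ => ?_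
  ring

lemma hasFDerivAt_Fw (x : Fin N → ℝ) (hx : Mf lam p c t0 x ≠ 0) :
    HasFDerivAt (Fw lam p c t0) (Lam (fun k => Gf lam p c t0 k x)) x := by
  have h := hasFDerivAt_div' ((hasFDerivAt_Vf (p := p) (c := c) (t0 := t0) x).const_mul lam)
    (hasFDerivAt_Mf (lam := lam) x) hx
  refine h.congr_fderiv ?_
  ext y
  simp only [Lam_apply, Gf, ContinuousLinearMap.smul_apply, ContinuousLinearMap.sub_apply,
    ContinuousLinearMap.neg_apply, smul_eq_mul]
  simp only [Finset.mul_sum]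
  rw [← Finset.sum_sub_distrib]
  simp only [Finset.mul_sum]
  refine Finset.sum_congr rfl fun k _ => ?_
  ring

lemma fderiv_Fw_single (x : Fin N → ℝ) (hx : Mf lam p c t0 x ≠ 0) (j : Fin N) :
    fderiv ℝ (Fw lam p c t0) x (Pi.single j 1) = Gf lam p c t0 j x := by
  rw [(hasFDerivAt_Fw x hx).fderiv, Lam_single]

end Stmt2Aux

namespace Stmt2Aux
variable {N : ℕ} {lam : ℝ} {p c t0 : Fin N → ℝ}

/-- Hessian entry formula: `∂_k ∂_j EW`. -/
noncomputable def HHe (lam : ℝ) (p c t0 : Fin N → ℝ) (j k : Fin N) (x : Fin N → ℝ) : ℝ :=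
  lam * (p j * c j) * ((if k = j then c j else 0) * (1 - lam * Uf p c t0 x)^2
    + lam * (p k * c k) * (1 - lam * Uf p c t0 x) * ((t0 j + c j * x j) + (t0 k + c k * x k))
    + lam^2 * (p k * c k) * Vf p c t0 x) / (1 - lam * Uf p c t0 x)^3

lemma Mf_ne (x : Fin N → ℝ) (hx : Mf lam p c t0 x ≠ 0) : (1 - lam * Uf p c t0 x) ≠ 0 := by
  intro h; apply hx; rw [Mf, h, mul_zero]

lemma hasFDerivAt_Gf (x : Fin N → ℝ) (hx : Mf lam p c t0 x ≠ 0) (j : Fin N) :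
    HasFDerivAt (Gf lam p c t0 j) (Lam (fun k => HHe lam p c t0 j k x)) x := by
  have hM := hasFDerivAt_Mf (lam := lam) (p := p) (c := c) (t0 := t0) x
  have hV := hasFDerivAt_Vf (p := p) (c := c) (t0 := t0) x
  have hAj : HasFDerivAt (fun y : Fin N → ℝ => lam * (p j * (2 * (t0 j + c j * y j) * c j)))
      (Lam (fun k => if k = j then lam * (p j * (2 * c j * c j)) else 0)) x := by
    have h1 : HasDerivAt (fun s : ℝ => lam * (p j * (2 * (t0 j + c j * s) * c j)))
        (lam * (p j * (2 * c j * c j))) (x j) := by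
      have h0 : HasDerivAt (fun s : ℝ => t0 j + c j * s) (c j) (x j) := by
        simpa using ((hasDerivAt_id (x j)).const_mul (c j)).const_add (t0 j)
      have := (((h0.const_mul 2).mul_const (c j)).const_mul (p j)).const_mul lam
      simpa [mul_assoc, mul_comm, mul_left_comm] using this
    have h2 : HasFDerivAt (fun y : Fin N → ℝ => lam * (p j * (2 * (t0 j + c j * y j) * c j)))
        ((lam * (p j * (2 * c j * c j))) • (ContinuousLinearMap.proj j : (Fin N → ℝ) →L[ℝ] ℝ)) x :=
      h1.comp_hasFDerivAt (f := fun y : Fin N → ℝ => y j) x (hasFDerivAt_apply j x)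
    refine h2.congr_fderiv ?_
    ext y
    simp only [Lam_apply, ContinuousLinearMap.smul_apply, ContinuousLinearMap.proj_apply,
      smul_eq_mul, ite_mul, zero_mul]
    simp [Finset.sum_ite_eq']
  have hn2 := (hM.mul hAj).add ((hV.const_mul lam).mul_const (2 * lam * (p j * c j)))
  have hd2 := hM.mul hM
  have hMM : Mf lam p c t0 x * Mf lam p c t0 x ≠ 0 := mul_ne_zero hx hx
  have hdiv := hasFDerivAt_div' hn2 hd2 hMM
  have heq : Gf lam p c t0 j = fun y =>
      (Mf lam p c t0 y * (lam * (p j * (2 * (t0 j + c j * y j) * c j)))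
        + lam * Vf p c t0 y * (2 * lam * (p j * c j)))
      / (Mf lam p c t0 y * Mf lam p c t0 y) := funext fun y => by rw [Gf, sq]
  rw [heq]
  refine hdiv.congr_fderiv ?_
  ext y
  have hD := Mf_ne (lam := lam) (p := p) (c := c) (t0 := t0) x hx
  simp only [Lam_apply, ContinuousLinearMap.smul_apply, ContinuousLinearMap.sub_apply,
    ContinuousLinearMap.add_apply, smul_eq_mul]
  simp only [Finset.mul_sum]
  rw [← Finset.sum_add_distrib, ← Finset.sum_add_distrib, ← Finset.sum_add_distrib,
    Finset.mul_sum, Finset.mul_sum, ← Finset.sum_sub_distrib, Finset.mul_sum]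
  refine Finset.sum_congr rfl fun k _ => ?_
  by_cases hk : k = j
  · subst hk
    simp only [HHe, if_pos rfl, Mf, Pi.mul_apply, Pi.add_apply, if_true]
    field_simp
    ring
  · simp only [HHe, if_neg hk, Mf, Pi.mul_apply, Pi.add_apply]
    field_simp
    ring

end Stmt2Aux

namespace Stmt2Aux
open Matrix
variable {N : ℕ} {lam : ℝ} {p c t0 : Fin N → ℝ}

lemma continuous_Mf : Continuous (Mf lam p c t0) := by
  have h : Continuous (Uf p c t0) := by
    apply continuous_finset_sum
    intro k _
    exact continuous_const.mul (continuous_const.add (continuous_const.mul (continuous_apply k)))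
  show Continuous fun x => 2 * (1 - lam * Uf p c t0 x)
  exact continuous_const.mul (continuous_const.sub (continuous_const.mul h))

lemma hessian_entry (ℓ : Fin N → ℝ) (hℓ : Mf lam p c t0 ℓ ≠ 0) (j k : Fin N) :
    fderiv ℝ (fun x => fderiv ℝ (Fw lam p c t0) x (Pi.single j 1)) ℓ (Pi.single k 1)
      = HHe lam p c t0 j k ℓ := by
  have hopen : IsOpen {x : Fin N → ℝ | Mf lam p c t0 x ≠ 0} :=
    isOpen_compl_singleton.preimage continuous_Mf
  have hev : (fun x => fderiv ℝ (Fw lam p c t0) x (Pi.single j 1)) =ᶠ[nhds ℓ]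
      Gf lam p c t0 j :=
    Filter.eventuallyEq_of_mem (hopen.mem_nhds hℓ) (fun x hx => fderiv_Fw_single x hx j)
  rw [hev.fderiv_eq, (hasFDerivAt_Gf ℓ hℓ j).fderiv, Lam_single]

lemma HHe_symm (ℓ : Fin N → ℝ) (i j : Fin N) :
    HHe lam p c t0 i j ℓ = HHe lam p c t0 j i ℓ := by
  by_cases h : i = j
  · subst h; rfl
  · rw [HHe, HHe, if_neg h, if_neg (Ne.symm h)]; ring

lemma posdef (hlam : 0 < lam) (hp : ∀ k, 0 < p k) (hc : ∀ k, 0 < c k) (ht0 : ∀ k, 0 < t0 k)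
    (ℓ : Fin N → ℝ) (hl0 : ∀ k, 0 ≤ ℓ k) (hD : 0 < 1 - lam * Uf p c t0 ℓ) :
    Matrix.PosDef (Matrix.of fun k j : Fin N => HHe lam p c t0 j k ℓ) := by
  rw [Matrix.posDef_iff_dotProduct_mulVec]
  constructor
  · show _ = _
    ext i j
    simp only [Matrix.conjTranspose_apply, Matrix.of_apply, star_trivial]
    exact HHe_symm ℓ i j
  · intro x hx0
    set D := 1 - lam * Uf p c t0 ℓ with hDdef
    set S1 := ∑ i, p i * c i * x i with hS1def
    set S2 := ∑ i, p i * c i * (t0 i + c i * ℓ i) * x i with hS2def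
    set S3 := ∑ i, p i * c i ^ 2 * x i ^ 2 with hS3def
    have hDne : D ≠ 0 := ne_of_gt hD
    have inner : ∀ k, (∑ j, HHe lam p c t0 j k ℓ * x j) =
        lam * (p k * c k) * (c k * D ^ 2 * x k + lam * D * S2
          + lam * D * (t0 k + c k * ℓ k) * S1 + lam ^ 2 * Vf p c t0 ℓ * S1) / D ^ 3 := by
      intro k
      have e1 : ∀ j ∈ Finset.univ, HHe lam p c t0 j k ℓ * x j =
          (if k = j then lam * (p j * c j) * c j * D ^ 2 * x j / D ^ 3 else 0)
          + (lam * lam * D * (p k * c k) / D ^ 3) * (p j * c j * (t0 j + c j * ℓ j) * x j)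
          + ((lam * lam * D * (t0 k + c k * ℓ k) + lam * lam ^ 2 * Vf p c t0 ℓ) * (p k * c k)
              / D ^ 3) * (p j * c j * x j) := by
        intro j _
        by_cases h : k = j
        · subst h; rw [HHe, if_pos rfl, if_pos rfl, ← hDdef]; ring
        · rw [HHe, if_neg h, if_neg h, ← hDdef]; ring
      rw [Finset.sum_congr rfl e1]
      rw [Finset.sum_add_distrib, Finset.sum_add_distrib, Finset.sum_ite_eq,
        ← Finset.mul_sum, ← Finset.mul_sum]
      simp only [Finset.mem_univ, if_true, ← hS1def, ← hS2def]
      ring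
    have hquad : (star x) ⬝ᵥ ((Matrix.of fun k j : Fin N => HHe lam p c t0 j k ℓ) *ᵥ x) =
        lam / D ^ 3 * ∑ i, p i * (lam * S1 * (t0 i + c i * ℓ i) + D * (c i * x i)) ^ 2 := by
      have h1 : (star x) ⬝ᵥ ((Matrix.of fun k j : Fin N => HHe lam p c t0 j k ℓ) *ᵥ x) =
          ∑ k, x k * ∑ j, HHe lam p c t0 j k ℓ * x j := by
        simp [dotProduct, Matrix.mulVec, Matrix.of_apply]
      rw [h1, Finset.sum_congr rfl (fun k _ => by rw [inner k])]
      have e2 : ∀ k ∈ Finset.univ, x k * (lam * (p k * c k) * (c k * D ^ 2 * x k + lam * D * S2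
          + lam * D * (t0 k + c k * ℓ k) * S1 + lam ^ 2 * Vf p c t0 ℓ * S1) / D ^ 3) =
          (lam * D ^ 2 / D ^ 3) * (p k * c k ^ 2 * x k ^ 2)
          + (lam * lam * D * S2 / D ^ 3) * (p k * c k * x k)
          + (lam * lam * D * S1 / D ^ 3) * (p k * c k * (t0 k + c k * ℓ k) * x k)
          + (lam * lam ^ 2 * Vf p c t0 ℓ * S1 / D ^ 3) * (p k * c k * x k) := by
        intro k _; ring
      rw [Finset.sum_congr rfl e2, Finset.sum_add_distrib, Finset.sum_add_distrib,
        Finset.sum_add_distrib, ← Finset.mul_sum, ← Finset.mul_sum, ← Finset.mul_sum,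
        ← Finset.mul_sum]
      have e3 : ∀ i ∈ Finset.univ, p i * (lam * S1 * (t0 i + c i * ℓ i) + D * (c i * x i)) ^ 2 =
          ((lam * S1) ^ 2) * (p i * (t0 i + c i * ℓ i) ^ 2)
          + (2 * lam * S1 * D) * (p i * c i * (t0 i + c i * ℓ i) * x i)
          + (D ^ 2) * (p i * c i ^ 2 * x i ^ 2) := by
        intro i _; ring
      have hVf : (∑ i, p i * (t0 i + c i * ℓ i) ^ 2) = Vf p c t0 ℓ := rfl
      have hRHS : ∑ i, p i * (lam * S1 * (t0 i + c i * ℓ i) + D * (c i * x i)) ^ 2 =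
          (lam * S1) ^ 2 * Vf p c t0 ℓ + 2 * lam * S1 * D * S2 + D ^ 2 * S3 := by
        rw [Finset.sum_congr rfl e3, Finset.sum_add_distrib, Finset.sum_add_distrib,
          ← Finset.mul_sum, ← Finset.mul_sum, ← Finset.mul_sum, hVf, ← hS2def, ← hS3def]
      rw [hRHS, ← hS1def, ← hS2def, ← hS3def]
      ring
    rw [hquad]
    have hterm : ∀ i ∈ Finset.univ,
        0 ≤ p i * (lam * S1 * (t0 i + c i * ℓ i) + D * (c i * x i)) ^ 2 := by
      intro i _
      have := (hp i).le
      positivity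
    have hsum_nonneg : 0 ≤ ∑ i, p i * (lam * S1 * (t0 i + c i * ℓ i) + D * (c i * x i)) ^ 2 :=
      Finset.sum_nonneg hterm
    have hsum_ne : (∑ i, p i * (lam * S1 * (t0 i + c i * ℓ i) + D * (c i * x i)) ^ 2) ≠ 0 := by
      intro h0
      have hz := (Finset.sum_eq_zero_iff_of_nonneg hterm).mp h0
      have hq : ∀ i, lam * S1 * (t0 i + c i * ℓ i) + D * (c i * x i) = 0 := by
        intro i
        have := hz i (Finset.mem_univ i)
        have h2 : (lam * S1 * (t0 i + c i * ℓ i) + D * (c i * x i)) ^ 2 = 0 := by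
          rcases mul_eq_zero.mp this with h | h
          · exact absurd h (ne_of_gt (hp i))
          · exact h
        exact pow_eq_zero_iff two_ne_zero |>.mp h2
      have hDS : D * S1 = -(lam * S1) * (∑ i, p i * (t0 i + c i * ℓ i)) := by
        rw [hS1def, Finset.mul_sum, Finset.mul_sum]
        refine Finset.sum_congr rfl fun i _ => ?_
        linear_combination (p i) * hq i
      have hS1 : S1 = 0 := by
        have h1 : S1 * (D + lam * (∑ i, p i * (t0 i + c i * ℓ i))) = 0 := by
          linear_combination hDS
        have h2 : D + lam * (∑ i, p i * (t0 i + c i * ℓ i)) = 1 := by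
          rw [hDdef]
          have : Uf p c t0 ℓ = ∑ i, p i * (t0 i + c i * ℓ i) := rfl
          rw [this]; ring
        rw [h2, mul_one] at h1
        exact h1
      have hx : x = 0 := by
        funext i
        have := hq i
        rw [hS1, mul_zero, zero_mul, zero_add] at this
        rcases mul_eq_zero.mp this with h | h
        · exact absurd h hDne
        · rcases mul_eq_zero.mp h with h' | h'
          · exact absurd h' (ne_of_gt (hc i))
          · exact h'
      exact hx0 hx
    have hsum_pos : 0 < ∑ i, p i * (lam * S1 * (t0 i + c i * ℓ i) + D * (c i * x i)) ^ 2 :=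
      lt_of_le_of_ne hsum_nonneg (Ne.symm hsum_ne)
    exact mul_pos (div_pos hlam (pow_pos hD 3)) hsum_pos

end Stmt2Aux

namespace Stmt2Aux
variable {N : ℕ} {lam : ℝ} {p : Fin N → ℝ}

lemma oneD (hlam : 0 < lam) (hp : ∀ k, 0 < p k) {α β : Fin N → ℝ}
    (hq : ∀ (k : Fin N), ∀ θ ∈ Set.Icc (0:ℝ) 1, 0 < α k + β k * θ)
    (hβ : ∃ k, β k ≠ 0)
    (hL : ∀ θ ∈ Set.Icc (0:ℝ) 1, 0 < 1 - lam * ∑ k, p k * (α k + β k * θ)) :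
    StrictConvexOn ℝ (Set.Icc (0:ℝ) 1)
      (fun θ => lam * (∑ k, p k * (α k + β k * θ) ^ 2)
        / (2 * (1 - lam * ∑ k, p k * (α k + β k * θ)))) := by
  have hq' : ∀ (k : Fin N) (θ : ℝ), HasDerivAt (fun θ => α k + β k * θ) (β k) θ := by
    intro k θ
    simpa using ((hasDerivAt_id θ).const_mul (β k)).const_add (α k)
  have hP' : ∀ θ : ℝ, HasDerivAt (fun θ => ∑ k, p k * (α k + β k * θ) ^ 2)
      (∑ k, p k * (2 * (α k + β k * θ) * β k)) θ := by
    intro θ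
    apply HasDerivAt.fun_sum
    intro k _
    have := ((hq' k θ).pow 2).const_mul (p k)
    simpa [mul_assoc, mul_comm, mul_left_comm] using this
  have hL' : ∀ θ : ℝ, HasDerivAt (fun θ => 1 - lam * ∑ k, p k * (α k + β k * θ))
      (-(lam * ∑ k, p k * β k)) θ := by
    intro θ
    have hS : HasDerivAt (fun θ => ∑ k, p k * (α k + β k * θ)) (∑ k, p k * β k) θ := by
      apply HasDerivAt.fun_sum
      intro k _
      exact (hq' k θ).const_mul (p k)
    simpa using (hS.const_mul lam).const_sub 1
  have hcont : ContinuousOn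
      (fun θ => lam * (∑ k, p k * (α k + β k * θ) ^ 2)
        / (2 * (1 - lam * ∑ k, p k * (α k + β k * θ)))) (Set.Icc (0:ℝ) 1) := by
    apply ContinuousOn.div
    · exact (continuous_const.mul (by
        apply continuous_finset_sum
        intro k _
        exact continuous_const.mul
          ((continuous_const.add (continuous_const.mul continuous_id)).pow 2))).continuousOn
    · exact (continuous_const.mul (continuous_const.sub (continuous_const.mul (by
        apply continuous_finset_sum
        intro k _
        exact continuous_const.mul
          (continuous_const.add (continuous_const.mul continuous_id)))))).continuousOn
    · intro θ hθ
      have h1 := hL θ hθ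
      positivity
  have hderiv1 : ∀ θ ∈ Set.Ioo (0:ℝ) 1,
      deriv (fun θ => lam * (∑ k, p k * (α k + β k * θ) ^ 2)
        / (2 * (1 - lam * ∑ k, p k * (α k + β k * θ)))) θ
      = (fun θ => (lam * (∑ k, p k * (2 * (α k + β k * θ) * β k))
            * (2 * (1 - lam * ∑ k, p k * (α k + β k * θ)))
          - lam * (∑ k, p k * (α k + β k * θ) ^ 2) * (2 * -(lam * ∑ k, p k * β k)))
          / (2 * (1 - lam * ∑ k, p k * (α k + β k * θ))) ^ 2) θ := by
    intro θ hθ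
    have hLpos := hL θ (Set.mem_Icc_of_Ioo hθ)
    have h2L : (2 : ℝ) * (1 - lam * ∑ k, p k * (α k + β k * θ)) ≠ 0 := by positivity
    exact (((hP' θ).const_mul lam).div ((hL' θ).const_mul 2) h2L).deriv
  apply strictConvexOn_of_deriv2_pos (convex_Icc 0 1) hcont
  intro θ0 hθ0
  rw [interior_Icc] at hθ0
  have hLpos := hL θ0 (Set.mem_Icc_of_Ioo hθ0)
  have hLne : (1 - lam * ∑ k, p k * (α k + β k * θ0)) ≠ 0 := ne_of_gt hLpos
  have hev : deriv (fun θ => lam * (∑ k, p k * (α k + β k * θ) ^ 2)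
        / (2 * (1 - lam * ∑ k, p k * (α k + β k * θ)))) =ᶠ[nhds θ0]
      (fun θ => (lam * (∑ k, p k * (2 * (α k + β k * θ) * β k))
            * (2 * (1 - lam * ∑ k, p k * (α k + β k * θ)))
          - lam * (∑ k, p k * (α k + β k * θ) ^ 2) * (2 * -(lam * ∑ k, p k * β k)))
          / (2 * (1 - lam * ∑ k, p k * (α k + β k * θ))) ^ 2) :=
    Filter.eventuallyEq_of_mem (isOpen_Ioo.mem_nhds hθ0) hderiv1
  have hit : (deriv^[2] (fun θ => lam * (∑ k, p k * (α k + β k * θ) ^ 2)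
        / (2 * (1 - lam * ∑ k, p k * (α k + β k * θ))))) θ0
      = deriv (deriv (fun θ => lam * (∑ k, p k * (α k + β k * θ) ^ 2)
        / (2 * (1 - lam * ∑ k, p k * (α k + β k * θ))))) θ0 := rfl
  rw [hit, hev.deriv_eq]
  -- differentiate the first-derivative formula
  have hP1' : HasDerivAt (fun θ => ∑ k, p k * (2 * (α k + β k * θ) * β k))
      (∑ k, p k * (2 * β k * β k)) θ0 := by
    apply HasDerivAt.fun_sum
    intro k _
    exact (((hq' k θ0).const_mul 2).mul_const (β k)).const_mul (p k)
  have hnu : HasDerivAt (fun θ => lam * (∑ k, p k * (2 * (α k + β k * θ) * β k))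
            * (2 * (1 - lam * ∑ k, p k * (α k + β k * θ)))
          - lam * (∑ k, p k * (α k + β k * θ) ^ 2) * (2 * -(lam * ∑ k, p k * β k)))
      ((lam * (∑ k, p k * (2 * β k * β k)))
          * (2 * (1 - lam * ∑ k, p k * (α k + β k * θ0)))
        + (lam * (∑ k, p k * (2 * (α k + β k * θ0) * β k))) * (2 * -(lam * ∑ k, p k * β k))
        - (lam * (∑ k, p k * (2 * (α k + β k * θ0) * β k))) * (2 * -(lam * ∑ k, p k * β k))) θ0 :=
    ((hP1'.const_mul lam).mul ((hL' θ0).const_mul 2)).sub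
      (((hP' θ0).const_mul lam).mul_const (2 * -(lam * ∑ k, p k * β k)))
  have hde : HasDerivAt (fun θ => (2 * (1 - lam * ∑ k, p k * (α k + β k * θ))) ^ 2)
      (((2 : ℕ) : ℝ) * (2 * (1 - lam * ∑ k, p k * (α k + β k * θ0))) ^ (2 - 1)
        * (2 * -(lam * ∑ k, p k * β k))) θ0 := ((hL' θ0).const_mul 2).pow 2
  have hdene : ((2 : ℝ) * (1 - lam * ∑ k, p k * (α k + β k * θ0))) ^ 2 ≠ 0 := by positivity
  have hg1' := hnu.fun_div hde hdene
  rw [hg1'.deriv]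
  -- sum of squares identity
  have e : ∀ k ∈ Finset.univ, (2:ℝ) * (p k * ((1 - lam * ∑ i, p i * (α i + β i * θ0)) * β k
        - -(lam * ∑ i, p i * β i) * (α k + β k * θ0)) ^ 2) =
      (1 - lam * ∑ i, p i * (α i + β i * θ0)) ^ 2 * (p k * (2 * β k * β k))
      - 2 * (1 - lam * ∑ i, p i * (α i + β i * θ0)) * (-(lam * ∑ i, p i * β i))
          * (p k * (2 * (α k + β k * θ0) * β k))
      + 2 * (-(lam * ∑ i, p i * β i)) ^ 2 * (p k * (α k + β k * θ0) ^ 2) := by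
    intro k _; ring
  have hSOS2 : 2 * (∑ k, p k * ((1 - lam * ∑ i, p i * (α i + β i * θ0)) * β k
        - -(lam * ∑ i, p i * β i) * (α k + β k * θ0)) ^ 2) =
      (1 - lam * ∑ i, p i * (α i + β i * θ0)) ^ 2 * (∑ k, p k * (2 * β k * β k))
      - 2 * (1 - lam * ∑ i, p i * (α i + β i * θ0)) * (-(lam * ∑ i, p i * β i))
          * (∑ k, p k * (2 * (α k + β k * θ0) * β k))
      + 2 * (-(lam * ∑ i, p i * β i)) ^ 2 * (∑ k, p k * (α k + β k * θ0) ^ 2) := by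
    rw [Finset.mul_sum, Finset.sum_congr rfl e, Finset.sum_add_distrib, Finset.sum_sub_distrib,
      ← Finset.mul_sum, ← Finset.mul_sum, ← Finset.mul_sum]
  -- value of the second derivative
  have hval : ((lam * (∑ k, p k * (2 * β k * β k)))
          * (2 * (1 - lam * ∑ k, p k * (α k + β k * θ0)))
        + (lam * (∑ k, p k * (2 * (α k + β k * θ0) * β k))) * (2 * -(lam * ∑ k, p k * β k))
        - (lam * (∑ k, p k * (2 * (α k + β k * θ0) * β k))) * (2 * -(lam * ∑ k, p k * β k)))
        * (2 * (1 - lam * ∑ k, p k * (α k + β k * θ0))) ^ 2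
      - (lam * (∑ k, p k * (2 * (α k + β k * θ0) * β k))
            * (2 * (1 - lam * ∑ k, p k * (α k + β k * θ0)))
          - lam * (∑ k, p k * (α k + β k * θ0) ^ 2) * (2 * -(lam * ∑ k, p k * β k)))
        * (((2 : ℕ) : ℝ) * (2 * (1 - lam * ∑ k, p k * (α k + β k * θ0))) ^ (2 - 1)
          * (2 * -(lam * ∑ k, p k * β k))) =
      (((2 * (1 - lam * ∑ k, p k * (α k + β k * θ0))) ^ 2) ^ 2) *
        (lam * (2 * (∑ k, p k * ((1 - lam * ∑ i, p i * (α i + β i * θ0)) * β k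
            - -(lam * ∑ i, p i * β i) * (α k + β k * θ0)) ^ 2))
          / (2 * (1 - lam * ∑ i, p i * (α i + β i * θ0)) ^ 3)) := by
    rw [hSOS2]
    generalize (∑ k, p k * (α k + β k * θ0)) = U at hLne ⊢
    generalize (∑ k, p k * (2 * β k * β k)) = A
    generalize (∑ k, p k * (2 * (α k + β k * θ0) * β k)) = B
    generalize (∑ k, p k * β k) = C
    generalize (∑ k, p k * (α k + β k * θ0) ^ 2) = Q
    field_simp
    ring
  -- positivity of the sum of squares
  have hterm : ∀ k ∈ Finset.univ, (0:ℝ) ≤ p k * ((1 - lam * ∑ i, p i * (α i + β i * θ0)) * β k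
      - -(lam * ∑ i, p i * β i) * (α k + β k * θ0)) ^ 2 := by
    intro k _
    have := (hp k).le
    positivity
  have hSOSpos : 0 < ∑ k, p k * ((1 - lam * ∑ i, p i * (α i + β i * θ0)) * β k
      - -(lam * ∑ i, p i * β i) * (α k + β k * θ0)) ^ 2 := by
    rcases lt_or_eq_of_le (Finset.sum_nonneg hterm) with h | h
    · exact h
    exfalso
    have hz := (Finset.sum_eq_zero_iff_of_nonneg hterm).mp h.symm
    have hqz : ∀ k, (1 - lam * ∑ i, p i * (α i + β i * θ0)) * β k
        - -(lam * ∑ i, p i * β i) * (α k + β k * θ0) = 0 := by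
      intro k
      have h1 := hz k (Finset.mem_univ k)
      rcases mul_eq_zero.mp h1 with h2 | h2
      · exact absurd h2 (ne_of_gt (hp k))
      · exact pow_eq_zero_iff two_ne_zero |>.mp h2
    have hT0 : (0:ℝ) ≤ ∑ i, p i * (α i + β i * θ0) :=
      Finset.sum_nonneg fun i _ =>
        mul_nonneg (hp i).le (hq i θ0 (Set.mem_Icc_of_Ioo hθ0)).le
    have hWL : (1 - lam * ∑ i, p i * (α i + β i * θ0)) * (∑ i, p i * β i)
        = -(lam * ∑ i, p i * β i) * (∑ i, p i * (α i + β i * θ0)) := by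
      rw [Finset.mul_sum Finset.univ (fun i => p i * β i)
            (1 - lam * ∑ i, p i * (α i + β i * θ0)),
          Finset.mul_sum Finset.univ (fun i => p i * (α i + β i * θ0))
            (-(lam * ∑ i, p i * β i))]
      refine Finset.sum_congr rfl fun i _ => ?_
      linear_combination (p i) * hqz i
    have hW0 : (∑ i, p i * β i) = 0 := by
      have h1 : (∑ i, p i * β i) * ((1 - lam * ∑ i, p i * (α i + β i * θ0))
          + lam * ∑ i, p i * (α i + β i * θ0)) = 0 := by
        linear_combination hWL
      have h2 : (1 - lam * ∑ i, p i * (α i + β i * θ0))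
          + lam * ∑ i, p i * (α i + β i * θ0) > 0 := by linarith
      rcases mul_eq_zero.mp h1 with h3 | h3
      · exact h3
      · exact absurd h3 (ne_of_gt h2)
    obtain ⟨k0, hk0⟩ := hβ
    have := hqz k0
    rw [hW0] at this
    simp only [mul_zero, neg_zero, zero_mul, sub_zero] at this
    rcases mul_eq_zero.mp this with h4 | h4
    · exact hLne h4
    · exact hk0 h4
  have hpos : (0:ℝ) < lam * (2 * (∑ k, p k * ((1 - lam * ∑ i, p i * (α i + β i * θ0)) * β k
      - -(lam * ∑ i, p i * β i) * (α k + β k * θ0)) ^ 2))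
      / (2 * (1 - lam * ∑ i, p i * (α i + β i * θ0)) ^ 3) := by
    apply div_pos (mul_pos hlam (by linarith)) (by positivity)
  apply div_pos _ (by positivity)
  rw [hval]
  exact mul_pos (by positivity) hpos

end Stmt2Aux

/-- The Hessian of the mean waiting time
`E[W](ℓ) = λ E[S²(ℓ)] / (2(1 − λ E[S(ℓ)]))`, with `t_k(ℓ_k) = t0_k + c_k ℓ_k`,
is positive definite on the stability region `{ℓ : ℓ ≥ 0, λE[S(ℓ)] < 1}`, and
consequently `E[W]` is strictly convex in `ℓ` on this region. -/
theorem stmt_2 (N : ℕ) (hN : 1 ≤ N) (lam : ℝ) (hlam : 0 < lam)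
    (p c t0 : Fin N → ℝ)
    (hp : ∀ k, 0 < p k) (hpsum : ∑ k, p k = 1)
    (hc : ∀ k, 0 < c k) (ht0 : ∀ k, 0 < t0 k)
    (t : Fin N → ℝ → ℝ) (ht : ∀ k x, t k x = t0 k + c k * x)
    (ES ES2 : (Fin N → ℝ) → ℝ)
    (hES : ∀ ℓ, ES ℓ = ∑ k, p k * t k (ℓ k))
    (hES2 : ∀ ℓ, ES2 ℓ = ∑ k, p k * (t k (ℓ k)) ^ 2)
    (EW : (Fin N → ℝ) → ℝ)
    (hEW : ∀ ℓ, EW ℓ = lam * ES2 ℓ / (2 * (1 - lam * ES ℓ)))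
    (R : Set (Fin N → ℝ))
    (hR : R = {ℓ | (∀ k, 0 ≤ ℓ k) ∧ lam * ES ℓ < 1}) :
    (∀ ℓ ∈ R, Matrix.PosDef (Matrix.of fun k j : Fin N =>
        fderiv ℝ (fun x => fderiv ℝ EW x (Pi.single j 1)) ℓ (Pi.single k 1)))
    ∧ StrictConvexOn ℝ R EW := by
  have hUes : ∀ ℓ, Stmt2Aux.Uf p c t0 ℓ = ES ℓ := by
    intro ℓ
    rw [hES]
    exact Finset.sum_congr rfl fun k _ => by rw [ht]
  have hEWeq : EW = Stmt2Aux.Fw lam p c t0 := by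
    funext ℓ
    have h2 : ES2 ℓ = Stmt2Aux.Vf p c t0 ℓ := by
      rw [hES2]
      exact Finset.sum_congr rfl fun k _ => by rw [ht]
    rw [hEW, h2, ← hUes ℓ]
    rfl
  subst hR
  constructor
  · -- positive definiteness of the Hessian
    intro ℓ hℓ
    obtain ⟨hl0, hlt⟩ := hℓ
    have hD : 0 < 1 - lam * Stmt2Aux.Uf p c t0 ℓ := by
      rw [hUes ℓ]; linarith
    have hM : Stmt2Aux.Mf lam p c t0 ℓ ≠ 0 := by
      show (2:ℝ) * (1 - lam * Stmt2Aux.Uf p c t0 ℓ) ≠ 0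
      positivity
    have hmat : (Matrix.of fun k j : Fin N =>
        fderiv ℝ (fun x => fderiv ℝ EW x (Pi.single j 1)) ℓ (Pi.single k 1))
        = Matrix.of fun k j : Fin N => Stmt2Aux.HHe lam p c t0 j k ℓ := by
      ext k j
      simp only [Matrix.of_apply]
      rw [hEWeq]
      exact Stmt2Aux.hessian_entry ℓ hM j k
    rw [hmat]
    exact Stmt2Aux.posdef hlam hp hc ht0 ℓ hl0 hD
  · -- strict convexity
    constructor
    · -- convexity of R
      intro x hx y hy a b ha hb hab
      refine ⟨fun k => ?_, ?_⟩
      · have := hx.1 k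
        have := hy.1 k
        simp only [Pi.add_apply, Pi.smul_apply, smul_eq_mul]
        nlinarith
      · have hESaff : ES (a • x + b • y) = a * ES x + b * ES y := by
          rw [hES, hES, hES, Finset.mul_sum Finset.univ (fun k => p k * t k (x k)) a,
            Finset.mul_sum Finset.univ (fun k => p k * t k (y k)) b,
            ← Finset.sum_add_distrib]
          refine Finset.sum_congr rfl fun k _ => ?_
          simp only [Pi.add_apply, Pi.smul_apply, smul_eq_mul, ht]
          linear_combination (-(p k * t0 k)) * hab
        show lam * ES (a • x + b • y) < 1
        rw [hESaff]
        have h1 := hx.2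
        have h2 := hy.2
        rcases eq_or_lt_of_le ha with h | h
        · have hb1 : b = 1 := by linarith
          rw [← h, hb1]
          nlinarith
        · nlinarith [mul_pos h (by linarith : (0:ℝ) < 1 - lam * ES x),
            mul_nonneg hb (by linarith : (0:ℝ) ≤ 1 - lam * ES y)]
    · intro x hx y hy hxy a b ha hb hab
      have hconv1D := Stmt2Aux.oneD (p := p) hlam hp
        (α := fun k => t0 k + c k * x k) (β := fun k => c k * (y k - x k))
        (by
          intro k θ hθ
          show (0:ℝ) < t0 k + c k * x k + c k * (y k - x k) * θ
          have h1 := ht0 k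
          have h2 := (hc k).le
          have h3 := hx.1 k
          have h4 := hy.1 k
          have h5 := hθ.1
          have h6 := hθ.2
          nlinarith [mul_nonneg (mul_nonneg h2 h3) (sub_nonneg.mpr h6),
            mul_nonneg (mul_nonneg h2 h4) h5])
        (by
          obtain ⟨k, hk⟩ := Function.ne_iff.mp hxy
          exact ⟨k, mul_ne_zero (ne_of_gt (hc k)) (sub_ne_zero.mpr fun h => hk (by rw [h]))⟩)
        (by
          intro θ hθ
          have hsum : (∑ k, p k * ((t0 k + c k * x k) + (c k * (y k - x k)) * θ))
              = (1 - θ) * ES x + θ * ES y := by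
            rw [hES, hES, Finset.mul_sum Finset.univ (fun k => p k * t k (x k)) (1 - θ),
              Finset.mul_sum Finset.univ (fun k => p k * t k (y k)) θ,
              ← Finset.sum_add_distrib]
            refine Finset.sum_congr rfl fun k _ => ?_
            rw [ht, ht]
            ring
          rw [hsum]
          have h1 := hx.2
          have h2 := hy.2
          have h5 := hθ.1
          have h6 := hθ.2
          rcases eq_or_lt_of_le h5 with h | h
          · rw [← h]
            nlinarith
          · nlinarith [mul_nonneg (sub_nonneg.mpr h6) (by linarith : (0:ℝ) ≤ 1 - lam * ES x),
              mul_pos h (by linarith : (0:ℝ) < 1 - lam * ES y)])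
      obtain ⟨-, hstrict⟩ := hconv1D
      have h2 := hstrict (Set.left_mem_Icc.mpr zero_le_one) (Set.right_mem_Icc.mpr zero_le_one)
        (by norm_num) ha hb hab
      beta_reduce at h2
      have hb01 : a • (0:ℝ) + b • (1:ℝ) = b := by
        simp only [smul_eq_mul, mul_zero, mul_one, zero_add]
      rw [hb01] at h2
      have harg : ∀ k, (a • x + b • y) k = x k + (y k - x k) * b := by
        intro k
        simp only [Pi.add_apply, Pi.smul_apply, smul_eq_mul]
        linear_combination (x k) * hab
      have eb : EW (a • x + b • y) = lam * (∑ k, p k * ((t0 k + c k * x k)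
            + c k * (y k - x k) * b) ^ 2)
          / (2 * (1 - lam * ∑ k, p k * ((t0 k + c k * x k) + c k * (y k - x k) * b))) := by
        rw [hEWeq]
        show lam * Stmt2Aux.Vf p c t0 (a • x + b • y)
            / (2 * (1 - lam * Stmt2Aux.Uf p c t0 (a • x + b • y))) = _
        have hV : Stmt2Aux.Vf p c t0 (a • x + b • y)
            = ∑ k, p k * ((t0 k + c k * x k) + c k * (y k - x k) * b) ^ 2 :=
          Finset.sum_congr rfl fun k _ => by rw [harg k]; ring
        have hU : Stmt2Aux.Uf p c t0 (a • x + b • y)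
            = ∑ k, p k * ((t0 k + c k * x k) + c k * (y k - x k) * b) :=
          Finset.sum_congr rfl fun k _ => by rw [harg k]; ring
        rw [hV, hU]
      have ex : EW x = lam * (∑ k, p k * ((t0 k + c k * x k)
            + c k * (y k - x k) * 0) ^ 2)
          / (2 * (1 - lam * ∑ k, p k * ((t0 k + c k * x k) + c k * (y k - x k) * 0))) := by
        rw [hEWeq]
        show lam * Stmt2Aux.Vf p c t0 x / (2 * (1 - lam * Stmt2Aux.Uf p c t0 x)) = _
        have hV : Stmt2Aux.Vf p c t0 x
            = ∑ k, p k * ((t0 k + c k * x k) + c k * (y k - x k) * 0) ^ 2 :=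
          Finset.sum_congr rfl fun k _ => by ring
        have hU : Stmt2Aux.Uf p c t0 x
            = ∑ k, p k * ((t0 k + c k * x k) + c k * (y k - x k) * 0) :=
          Finset.sum_congr rfl fun k _ => by ring
        rw [hV, hU]
      have ey : EW y = lam * (∑ k, p k * ((t0 k + c k * x k)
            + c k * (y k - x k) * 1) ^ 2)
          / (2 * (1 - lam * ∑ k, p k * ((t0 k + c k * x k) + c k * (y k - x k) * 1))) := by
        rw [hEWeq]
        show lam * Stmt2Aux.Vf p c t0 y / (2 * (1 - lam * Stmt2Aux.Uf p c t0 y)) = _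
        have hV : Stmt2Aux.Vf p c t0 y
            = ∑ k, p k * ((t0 k + c k * x k) + c k * (y k - x k) * 1) ^ 2 :=
          Finset.sum_congr rfl fun k _ => by ring
        have hU : Stmt2Aux.Uf p c t0 y
            = ∑ k, p k * ((t0 k + c k * x k) + c k * (y k - x k) * 1) :=
          Finset.sum_congr rfl fun k _ => by ring
        rw [hV, hU]
      rw [eb, ex, ey]
      exact h2
end

section
/- The objective J(ℓ) = α Σ_k π_k p_k(ℓ_k) − λE[S²(ℓ)]/(2(1−λE[S(ℓ)])) − E[S(ℓ)] is strictly concave on the stability region {ℓ ∈ ℝ_{≥0}^N : λE[S(ℓ)] < 1}, given α > 0, A_k > 0, b_k > 0, π_k > 0, c_k > 0, t_{0k} > 0. -/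
open Finset Real

lemma qol_aux {a b x1 x2 y1 y2 : ℝ} (ha : 0 ≤ a) (hb : 0 ≤ b) (hab : a + b = 1)
    (hy1 : 0 < y1) (hy2 : 0 < y2) :
    (a*x1+b*x2)^2/(a*y1+b*y2) ≤ a*(x1^2/y1)+b*(x2^2/y2) := by
  have hy : 0 < a*y1+b*y2 := by
    rcases eq_or_lt_of_le ha with h | h
    · have hb1 : b = 1 := by linarith
      simp [← h, hb1]; linarith
    · have := mul_nonneg hb hy2.le
      nlinarith
  rw [div_le_iff₀ hy]
  have e : a*(x1^2/y1)+b*(x2^2/y2) = (a*x1^2*y2 + b*x2^2*y1)/(y1*y2) := by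
    field_simp
  rw [e, div_mul_eq_mul_div, le_div_iff₀ (by positivity)]
  nlinarith [mul_nonneg (mul_nonneg ha hb) (sq_nonneg (x1*y2-x2*y1))]

/-- The objective
`J(ℓ) = α Σ p_k p_k(ℓ_k) − λE[S²(ℓ)]/(2(1−λE[S(ℓ)])) − E[S(ℓ)]`
is strictly concave on the stability region `{ℓ ∈ ℝ₊^N : λE[S(ℓ)] < 1}`. -/
theorem stmt_5 (N : ℕ) (hN : 1 ≤ N) (lam α : ℝ) (hlam : 0 < lam) (hα : 0 < α)
    (p A D b c t0 : Fin N → ℝ)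
    (hp : ∀ k, 0 < p k) (hpsum : ∑ k, p k = 1)
    (hA : ∀ k, 0 < A k) (hA1 : ∀ k, A k ≤ 1)
    (hD : ∀ k, 0 ≤ D k) (hD1 : ∀ k, D k ≤ 1)
    (hb : ∀ k, 0 < b k) (hc : ∀ k, 0 < c k) (ht0 : ∀ k, 0 < t0 k)
    (pacc : Fin N → ℝ → ℝ)
    (hpacc : ∀ k x, pacc k x = A k * (1 - exp (-(b k) * x)) + D k)
    (t : Fin N → ℝ → ℝ) (ht : ∀ k x, t k x = t0 k + c k * x)
    (ES ES2 : (Fin N → ℝ) → ℝ)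
    (hES : ∀ ℓ, ES ℓ = ∑ k, p k * t k (ℓ k))
    (hES2 : ∀ ℓ, ES2 ℓ = ∑ k, p k * (t k (ℓ k)) ^ 2)
    (J : (Fin N → ℝ) → ℝ)
    (hJ : ∀ ℓ, J ℓ = α * ∑ k, p k * pacc k (ℓ k)
      - lam * ES2 ℓ / (2 * (1 - lam * ES ℓ)) - ES ℓ)
    (R : Set (Fin N → ℝ))
    (hR : R = {ℓ | (∀ k, 0 ≤ ℓ k) ∧ lam * ES ℓ < 1}) :
    StrictConcaveOn ℝ R J := by
  -- ES is affine
  have hESaff : ∀ (x y : Fin N → ℝ) (a e : ℝ), a + e = 1 →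
      ES (a • x + e • y) = a * ES x + e * ES y := by
    intro x y a e hae
    simp only [hES, ht, Pi.add_apply, Pi.smul_apply, smul_eq_mul, Finset.mul_sum,
      ← Finset.sum_add_distrib]
    refine Finset.sum_congr rfl fun k _ => ?_
    linear_combination (-(p k * t0 k)) * hae
  have hRconv : Convex ℝ R := by
    subst hR
    intro x hx y hy a e ha he hae
    refine ⟨fun k => ?_, ?_⟩
    · have := hx.1 k; have := hy.1 k
      simp only [Pi.add_apply, Pi.smul_apply, smul_eq_mul]
      positivity
    · rw [hESaff x y a e hae]
      rcases eq_or_lt_of_le ha with h0 | h0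
      · have he1 : e = 1 := by linarith
        simp only [← h0, he1, zero_mul, one_mul, zero_add]
        exact hy.2
      · have h1 : a * (lam * ES x) < a * 1 := (mul_lt_mul_iff_right₀ h0).mpr hx.2
        have h2 : e * (lam * ES y) ≤ e * 1 := mul_le_mul_of_nonneg_left hy.2.le he
        nlinarith
  refine ⟨hRconv, ?_⟩
  intro x hx y hy hxy a e ha he hae
  rw [hR] at hx hy
  have he' : e = 1 - a := by linarith
  subst he'
  set z := a • x + (1 - a) • y with hz
  have hzk : ∀ k, z k = a * x k + (1 - a) * y k := fun k => rfl
  have hs1 : 0 < 1 - lam * ES x := by linarith [hx.2]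
  have hs2 : 0 < 1 - lam * ES y := by linarith [hy.2]
  have hESz : ES z = a * ES x + (1 - a) * ES y := hESaff x y a (1 - a) (by ring)
  have hsz : 1 - lam * ES z = a * (1 - lam * ES x) + (1 - a) * (1 - lam * ES y) := by
    rw [hESz]; ring
  have hszpos : 0 < 1 - lam * ES z := by
    rw [hsz]; positivity
  -- strict concavity of the reward part
  obtain ⟨k0, hk0⟩ : ∃ k, x k ≠ y k := Function.ne_iff.mp hxy
  have hFle : ∀ k, a * (p k * pacc k (x k)) + (1 - a) * (p k * pacc k (y k))
      ≤ p k * pacc k (z k) := by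
    intro k
    rcases eq_or_ne (x k) (y k) with h | h
    · have hzy : z k = y k := by rw [hzk, h]; ring
      rw [hzy, h]
      have : a * (p k * pacc k (y k)) + (1 - a) * (p k * pacc k (y k))
          = p k * pacc k (y k) := by ring
      linarith
    · have hcv := convexOn_exp.2 (Set.mem_univ (-(b k) * x k)) (Set.mem_univ (-(b k) * y k))
        ha.le he.le hae
      simp only [smul_eq_mul] at hcv
      have hz' : -(b k) * z k = a * (-(b k) * x k) + (1 - a) * (-(b k) * y k) := by
        rw [hzk]; ring
      rw [hpacc, hpacc, hpacc, hz']
      have key : 0 ≤ p k * A k * ((a * exp (-(b k) * x k) + (1 - a) * exp (-(b k) * y k))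
          - exp (a * (-(b k) * x k) + (1 - a) * (-(b k) * y k))) :=
        mul_nonneg (mul_nonneg (hp k).le (hA k).le) (sub_nonneg.mpr hcv)
      nlinarith [key]
  have hFlt : a * (p k0 * pacc k0 (x k0)) + (1 - a) * (p k0 * pacc k0 (y k0))
      < p k0 * pacc k0 (z k0) := by
    have hne : -(b k0) * x k0 ≠ -(b k0) * y k0 := by
      intro hcon
      exact hk0 (mul_left_cancel₀ (by nlinarith [hb k0] : -(b k0) ≠ 0) hcon)
    have hcv := strictConvexOn_exp.2 (Set.mem_univ (-(b k0) * x k0))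
      (Set.mem_univ (-(b k0) * y k0)) hne ha he hae
    simp only [smul_eq_mul] at hcv
    have hz' : -(b k0) * z k0 = a * (-(b k0) * x k0) + (1 - a) * (-(b k0) * y k0) := by
      rw [hzk]; ring
    rw [hpacc, hpacc, hpacc, hz']
    have key : 0 < p k0 * A k0 * ((a * exp (-(b k0) * x k0) + (1 - a) * exp (-(b k0) * y k0))
        - exp (a * (-(b k0) * x k0) + (1 - a) * (-(b k0) * y k0))) :=
      mul_pos (mul_pos (hp k0) (hA k0)) (sub_pos.mpr hcv)
    nlinarith [key]
  have hF : a * (α * ∑ k, p k * pacc k (x k)) + (1 - a) * (α * ∑ k, p k * pacc k (y k))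
      < α * ∑ k, p k * pacc k (z k) := by
    have hsum : ∑ k, (a * (p k * pacc k (x k)) + (1 - a) * (p k * pacc k (y k)))
        < ∑ k, p k * pacc k (z k) :=
      Finset.sum_lt_sum (fun k _ => hFle k) ⟨k0, Finset.mem_univ k0, hFlt⟩
    rw [Finset.sum_add_distrib, ← Finset.mul_sum, ← Finset.mul_sum] at hsum
    calc a * (α * ∑ k, p k * pacc k (x k)) + (1 - a) * (α * ∑ k, p k * pacc k (y k))
        = α * (a * ∑ k, p k * pacc k (x k) + (1 - a) * ∑ k, p k * pacc k (y k)) := by ring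
      _ < α * ∑ k, p k * pacc k (z k) := (mul_lt_mul_iff_right₀ hα).mpr hsum
  -- convexity of the queueing part
  have hGrep : ∀ (w : Fin N → ℝ), 1 - lam * ES w ≠ 0 → lam * ES2 w / (2 * (1 - lam * ES w))
      = ∑ k, (lam * p k / 2) * ((t k (w k))^2 / (1 - lam * ES w)) := by
    intro w hw
    rw [hES2, Finset.mul_sum, Finset.sum_div]
    refine Finset.sum_congr rfl fun k _ => ?_
    field_simp
  have htz : ∀ k, t k (z k) = a * t k (x k) + (1 - a) * t k (y k) := by
    intro k
    rw [ht, ht, ht, hzk]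
    ring
  have hG : lam * ES2 z / (2 * (1 - lam * ES z))
      ≤ a * (lam * ES2 x / (2 * (1 - lam * ES x)))
        + (1 - a) * (lam * ES2 y / (2 * (1 - lam * ES y))) := by
    rw [hGrep z hszpos.ne', hGrep x hs1.ne', hGrep y hs2.ne', Finset.mul_sum, Finset.mul_sum,
      ← Finset.sum_add_distrib]
    refine Finset.sum_le_sum fun k _ => ?_
    have hq := qol_aux (x1 := t k (x k)) (x2 := t k (y k)) ha.le he.le hae hs1 hs2
    rw [htz k, hsz]
    have hcoef : 0 ≤ lam * p k / 2 := div_nonneg (mul_nonneg hlam.le (hp k).le) (by norm_num)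
    calc lam * p k / 2 * ((a * t k (x k) + (1 - a) * t k (y k)) ^ 2
            / (a * (1 - lam * ES x) + (1 - a) * (1 - lam * ES y)))
        ≤ lam * p k / 2 * (a * ((t k (x k))^2 / (1 - lam * ES x))
            + (1 - a) * ((t k (y k))^2 / (1 - lam * ES y))) :=
          mul_le_mul_of_nonneg_left hq hcoef
      _ = a * (lam * p k / 2 * ((t k (x k))^2 / (1 - lam * ES x)))
            + (1 - a) * (lam * p k / 2 * ((t k (y k))^2 / (1 - lam * ES y))) := by ring
  -- combine
  simp only [smul_eq_mul, hJ]
  have expand : a * (α * (∑ k, p k * pacc k (x k))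
        - lam * ES2 x / (2 * (1 - lam * ES x)) - ES x)
      + (1 - a) * (α * (∑ k, p k * pacc k (y k))
        - lam * ES2 y / (2 * (1 - lam * ES y)) - ES y)
      = (a * (α * ∑ k, p k * pacc k (x k)) + (1 - a) * (α * ∑ k, p k * pacc k (y k)))
        - (a * (lam * ES2 x / (2 * (1 - lam * ES x)))
          + (1 - a) * (lam * ES2 y / (2 * (1 - lam * ES y))))
        - (a * ES x + (1 - a) * ES y) := by ring
  rw [expand, ← hESz]
  linarith [hF, hG]
end

section
/- For the objective J(ℓ) = α Σ_k π_k (A_k(1 − e^{−b_k ℓ_k}) + D_k) − λE[S²(ℓ)]/(2(1−λE[S(ℓ)])) − E[S(ℓ)], the mixed second partial derivatives satisfy, for all ℓ ∈ [0, ℓ_max]^N, |∂²J/∂ℓ_k∂ℓ_j| ≤ H_{kj} where H_{kj} = λ δ_{kj} π_k c_k²/(1−ρ_max) + λ² π_k c_k π_j c_j (t_k^max + t_j^max)/(1−ρ_max)² + λ³ π_k c_k π_j c_j E[S²]_max/(1−ρ_max)³ + α δ_{kj} π_k A_k b_k², with t_k^max = t_{0k} + c_k ℓ_max, E[S]_max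 = Σ π_i t_i^max, E[S²]_max = Σ π_i (t_i^max)², ρ_max = λE[S]_max, assuming ρ_max < 1. -/
open Finset Real

section Aux

variable {N : ℕ}

lemma eval_sum_proj (a : Fin N → ℝ) (k : Fin N) :
    (∑ i, a i • ContinuousLinearMap.proj (R := ℝ) (φ := fun _ : Fin N => ℝ) i)
      (Pi.single k 1) = a k := by
  simp [ContinuousLinearMap.sum_apply, ContinuousLinearMap.proj_apply, Pi.single_apply]

lemma aux_proj (i : Fin N) (y : Fin N → ℝ) :
    HasFDerivAt (fun y : Fin N → ℝ => y i)
      (ContinuousLinearMap.proj (R := ℝ) (φ := fun _ : Fin N => ℝ) i) y := by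
  exact (ContinuousLinearMap.proj (R := ℝ) (φ := fun _ : Fin N => ℝ) i).hasFDerivAt

lemma aux_g (p t0 c : Fin N → ℝ) (y : Fin N → ℝ) :
    HasFDerivAt (fun y : Fin N → ℝ => ∑ i, p i * (t0 i + c i * y i))
      (∑ i, (p i * c i) • ContinuousLinearMap.proj (R := ℝ) (φ := fun _ : Fin N => ℝ) i) y := by
  apply HasFDerivAt.fun_sum
  intro i _
  have := (((aux_proj i y).const_mul (c i)).const_add (t0 i)).const_mul (p i)
  refine this.congr_fderiv ?_
  rw [smul_smul]

lemma aux_h (p t0 c : Fin N → ℝ) (y : Fin N → ℝ) :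
    HasFDerivAt (fun y : Fin N → ℝ => ∑ i, p i * (t0 i + c i * y i) ^ 2)
      (∑ i, (p i * (2 * (t0 i + c i * y i) * c i)) •
        ContinuousLinearMap.proj (R := ℝ) (φ := fun _ : Fin N => ℝ) i) y := by
  apply HasFDerivAt.fun_sum
  intro i _
  have h2 := ((aux_proj i y).const_mul (c i)).const_add (t0 i)
  simp only [pow_two]
  have h3 := (h2.fun_mul h2).const_mul (p i)
  refine h3.congr_fderiv ?_
  ext x
  simp [smul_smul]
  ring

lemma aux_f (α : ℝ) (p A D b : Fin N → ℝ) (y : Fin N → ℝ) :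
    HasFDerivAt (fun y : Fin N → ℝ =>
        α * ∑ i, p i * (A i * (1 - Real.exp (-(b i) * y i)) + D i))
      (∑ i, (α * (p i * (A i * (Real.exp (-(b i) * y i) * b i)))) •
        ContinuousLinearMap.proj (R := ℝ) (φ := fun _ : Fin N => ℝ) i) y := by
  have hsum : HasFDerivAt (fun y : Fin N → ℝ =>
        ∑ i, p i * (A i * (1 - Real.exp (-(b i) * y i)) + D i))
      (∑ i, (p i * (A i * (Real.exp (-(b i) * y i) * b i))) •
        ContinuousLinearMap.proj (R := ℝ) (φ := fun _ : Fin N => ℝ) i) y := by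
    apply HasFDerivAt.fun_sum
    intro i _
    have h2 := (aux_proj i y).const_mul (-(b i))
    have h3 : HasFDerivAt (fun y : Fin N → ℝ => Real.exp (-(b i) * y i))
        (Real.exp (-(b i) * y i) • ((-(b i)) •
          ContinuousLinearMap.proj (R := ℝ) (φ := fun _ : Fin N => ℝ) i)) y :=
      (Real.hasDerivAt_exp (-(b i) * y i)).comp_hasFDerivAt (h₂ := Real.exp) y h2
    have h4 := (((h3.const_sub 1).const_mul (A i)).add_const (D i)).const_mul (p i)
    refine h4.congr_fderiv ?_
    ext x
    simp [smul_smul]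
    try ring
  have := hsum.const_mul α
  refine this.congr_fderiv ?_
  rw [Finset.smul_sum]
  congr 1; ext i
  rw [smul_smul]

end Aux

set_option maxHeartbeats 2000000 in
/-- For
`J(ℓ) = α Σ p_k (A_k(1 − e^{−b_k ℓ_k}) + D_k) − λE[S²(ℓ)]/(2(1−λE[S(ℓ)])) − E[S(ℓ)]`,
the mixed second partials satisfy `|∂²J/∂ℓ_k∂ℓ_j| ≤ H_{kj}` on `[0, ℓmax]^N`,
where
`H_{kj} = λ δ_{kj} p_k c_k²/(1−ρmax) + λ² p_k c_k p_j c_j (t_k^max + t_j^max)/(1−ρmax)²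
  + λ³ p_k c_k p_j c_j E[S²]_max/(1−ρmax)³ + α δ_{kj} p_k A_k b_k²`. -/
theorem stmt_14 (N : ℕ) (hN : 1 ≤ N) (lam α lmax : ℝ)
    (hlam : 0 < lam) (hα : 0 < α) (hlmax : 0 < lmax)
    (p A D b c t0 : Fin N → ℝ)
    (hp : ∀ k, 0 < p k) (hpsum : ∑ k, p k = 1)
    (hA : ∀ k, 0 < A k) (hA1 : ∀ k, A k ≤ 1)
    (hD : ∀ k, 0 ≤ D k) (hD1 : ∀ k, D k ≤ 1)
    (hb : ∀ k, 0 < b k) (hc : ∀ k, 0 < c k) (ht0 : ∀ k, 0 < t0 k)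
    (t : Fin N → ℝ → ℝ) (ht : ∀ k x, t k x = t0 k + c k * x)
    (ES ES2 : (Fin N → ℝ) → ℝ)
    (hES : ∀ ℓ, ES ℓ = ∑ k, p k * t k (ℓ k))
    (hES2 : ∀ ℓ, ES2 ℓ = ∑ k, p k * (t k (ℓ k)) ^ 2)
    (J : (Fin N → ℝ) → ℝ)
    (hJ : ∀ ℓ, J ℓ = α * ∑ k, p k * (A k * (1 - exp (-(b k) * ℓ k)) + D k)
      - lam * ES2 ℓ / (2 * (1 - lam * ES ℓ)) - ES ℓ)
    (tmax : Fin N → ℝ) (htmax : ∀ k, tmax k = t0 k + c k * lmax)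
    (ESmax ES2max ρmax : ℝ)
    (hESmax : ESmax = ∑ i, p i * tmax i)
    (hES2max : ES2max = ∑ i, p i * (tmax i) ^ 2)
    (hρmax : ρmax = lam * ESmax) (hρlt : ρmax < 1)
    (H : Fin N → Fin N → ℝ)
    (hH : ∀ k j, H k j =
      lam * (if k = j then 1 else 0) * p k * (c k) ^ 2 / (1 - ρmax)
      + lam ^ 2 * p k * c k * (p j * c j) * (tmax k + tmax j) / (1 - ρmax) ^ 2
      + lam ^ 3 * p k * c k * (p j * c j) * ES2max / (1 - ρmax) ^ 3
      + α * (if k = j then 1 else 0) * p k * A k * (b k) ^ 2) :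
    ∀ ℓ : Fin N → ℝ, (∀ k, 0 ≤ ℓ k ∧ ℓ k ≤ lmax) →
      ∀ k j : Fin N,
        |fderiv ℝ (fun y => fderiv ℝ J y (Pi.single j 1)) ℓ (Pi.single k 1)|
          ≤ H k j := by
  intro ℓ hbox k j
  classical
  have hJeq : J = fun y : Fin N → ℝ =>
      α * ∑ i, p i * (A i * (1 - Real.exp (-(b i) * y i)) + D i)
      - lam * (∑ i, p i * (t0 i + c i * y i) ^ 2) /
          (2 * (1 - lam * ∑ i, p i * (t0 i + c i * y i)))
      - ∑ i, p i * (t0 i + c i * y i) := by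
    funext y
    rw [hJ, hES, hES2]
    simp only [ht]
  have h1ρ : (0 : ℝ) < 1 - ρmax := by linarith
  -- the open region
  have hGcont : Continuous (fun y : Fin N → ℝ => ∑ i, p i * (t0 i + c i * y i)) := by
    apply continuous_finset_sum
    intro i _
    exact continuous_const.mul (continuous_const.add (continuous_const.mul (continuous_apply i)))
  have hUopen : IsOpen {y : Fin N → ℝ | lam * ∑ i, p i * (t0 i + c i * y i) < 1} :=
    isOpen_lt (continuous_const.mul hGcont) continuous_const
  have hGle : (∑ i, p i * (t0 i + c i * ℓ i)) ≤ ESmax := by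
    rw [hESmax]
    apply Finset.sum_le_sum
    intro i _
    have : t0 i + c i * ℓ i ≤ tmax i := by
      rw [htmax]
      have := (hbox i).2
      nlinarith [hc i]
    nlinarith [hp i]
  have hℓmem : ℓ ∈ {y : Fin N → ℝ | lam * ∑ i, p i * (t0 i + c i * y i) < 1} := by
    have : lam * ∑ i, p i * (t0 i + c i * ℓ i) ≤ ρmax := by
      rw [hρmax]; nlinarith
    simpa using lt_of_le_of_lt this hρlt
  -- first-derivative formula on the open region
  have hder1 : ∀ y : Fin N → ℝ, lam * ∑ i, p i * (t0 i + c i * y i) < 1 →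
      fderiv ℝ J y (Pi.single j 1) =
        α * p j * A j * b j * Real.exp (-(b j) * y j)
        - (lam * (p j * c j) * (t0 j + c j * y j) /
            (1 - lam * ∑ i, p i * (t0 i + c i * y i))
          + lam ^ 2 * (p j * c j) * (∑ i, p i * (t0 i + c i * y i) ^ 2) /
            (2 * (1 - lam * ∑ i, p i * (t0 i + c i * y i)) ^ 2))
        - p j * c j := by
    intro y hy
    have hu : (1 : ℝ) - lam * ∑ i, p i * (t0 i + c i * y i) ≠ 0 := by
      intro h; rw [sub_eq_zero] at h; exact absurd h.symm (ne_of_lt hy)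
    have hu' : (0 : ℝ) < 1 - lam * ∑ i, p i * (t0 i + c i * y i) := by linarith
    have hden : (2 : ℝ) * (1 - lam * ∑ i, p i * (t0 i + c i * y i)) ≠ 0 := by
      positivity
    have df := aux_f α p A D b y
    have dg := aux_g p t0 c y
    have dh := aux_h p t0 c y
    have du := ((dg.const_mul lam).const_sub 1).const_mul 2
    have dinv := (hasDerivAt_inv hden).comp_hasFDerivAt y du
    have dq := (dh.const_mul lam).fun_mul dinv
    have dJ := (df.fun_sub dq).fun_sub dg
    rw [hJeq]
    simp only [Function.comp] at dJ
    simp only [div_eq_mul_inv]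
    rw [dJ.fderiv]
    simp only [ContinuousLinearMap.sub_apply, ContinuousLinearMap.add_apply,
      ContinuousLinearMap.smul_apply, eval_sum_proj, smul_eq_mul,
      ContinuousLinearMap.coe_smul', Pi.smul_apply, ContinuousLinearMap.neg_apply,
      ContinuousLinearMap.coe_sub', Pi.sub_apply]
    field_simp
    ring
  have heq2 : fderiv ℝ (fun y => fderiv ℝ J y (Pi.single j 1)) ℓ =
      fderiv ℝ (fun y : Fin N → ℝ =>
        α * p j * A j * b j * Real.exp (-(b j) * y j)
        - (lam * (p j * c j) * (t0 j + c j * y j) /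
            (1 - lam * ∑ i, p i * (t0 i + c i * y i))
          + lam ^ 2 * (p j * c j) * (∑ i, p i * (t0 i + c i * y i) ^ 2) /
            (2 * (1 - lam * ∑ i, p i * (t0 i + c i * y i)) ^ 2))
        - p j * c j) ℓ := by
    apply Filter.EventuallyEq.fderiv_eq
    exact Filter.eventually_of_mem (hUopen.mem_nhds hℓmem) hder1
  have huℓ' : (0:ℝ) < 1 - lam * ∑ i, p i * (t0 i + c i * ℓ i) := by
    have h1 : lam * ∑ i, p i * (t0 i + c i * ℓ i) ≤ ρmax := by rw [hρmax]; nlinarith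
    linarith
  have hu1 : 1 - ρmax ≤ 1 - lam * ∑ i, p i * (t0 i + c i * ℓ i) := by
    have h1 : lam * ∑ i, p i * (t0 i + c i * ℓ i) ≤ ρmax := by rw [hρmax]; nlinarith
    linarith
  have huℓ : (1:ℝ) - lam * ∑ i, p i * (t0 i + c i * ℓ i) ≠ 0 := ne_of_gt huℓ'
  have hden2 : (2:ℝ) * (1 - lam * ∑ i, p i * (t0 i + c i * ℓ i)) ^ 2 ≠ 0 := by positivity
  have hD2 : fderiv ℝ (fun y : Fin N → ℝ =>
        α * p j * A j * b j * Real.exp (-(b j) * y j)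
        - (lam * (p j * c j) * (t0 j + c j * y j) /
            (1 - lam * ∑ i, p i * (t0 i + c i * y i))
          + lam ^ 2 * (p j * c j) * (∑ i, p i * (t0 i + c i * y i) ^ 2) /
            (2 * (1 - lam * ∑ i, p i * (t0 i + c i * y i)) ^ 2))
        - p j * c j) ℓ (Pi.single k 1) =
      -((if k = j then (1:ℝ) else 0) * (α * p j * A j * b j ^ 2 * Real.exp (-(b j) * ℓ j))
        + (if k = j then (1:ℝ) else 0) * (lam * p j * c j ^ 2) /
            (1 - lam * ∑ i, p i * (t0 i + c i * ℓ i))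
        + lam ^ 2 * (p j * c j) * (p k * c k) *
            ((t0 j + c j * ℓ j) + (t0 k + c k * ℓ k)) /
            (1 - lam * ∑ i, p i * (t0 i + c i * ℓ i)) ^ 2
        + lam ^ 3 * (p j * c j) * (p k * c k) * (∑ i, p i * (t0 i + c i * ℓ i) ^ 2) /
            (1 - lam * ∑ i, p i * (t0 i + c i * ℓ i)) ^ 3) := by
    have dg := aux_g p t0 c ℓ
    have dh := aux_h p t0 c ℓ
    have dinner := (aux_proj j ℓ).const_mul (-(b j))
    have dexp0 : HasFDerivAt (fun y : Fin N → ℝ => Real.exp (-(b j) * y j))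
        (Real.exp (-(b j) * ℓ j) • ((-(b j)) •
          ContinuousLinearMap.proj (R := ℝ) (φ := fun _ : Fin N => ℝ) j)) ℓ :=
      (Real.hasDerivAt_exp (-(b j) * ℓ j)).comp_hasFDerivAt (h₂ := Real.exp) ℓ dinner
    have dexp := dexp0.const_mul (α * p j * A j * b j)
    have du := (dg.const_mul lam).const_sub 1
    have dinv1 := (hasDerivAt_inv huℓ).comp_hasFDerivAt ℓ du
    have daff := (((aux_proj j ℓ).const_mul (c j)).const_add (t0 j)).const_mul (lam * (p j * c j))
    have dterm2a := daff.fun_mul dinv1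
    have dusq' : HasFDerivAt (fun y : Fin N → ℝ =>
        2 * (1 - lam * ∑ i, p i * (t0 i + c i * y i)) ^ 2)
        ((2:ℝ) • ((1 - lam * ∑ i, p i * (t0 i + c i * ℓ i)) •
            -(lam • ∑ i, (p i * c i) • ContinuousLinearMap.proj (R := ℝ) (φ := fun _ : Fin N => ℝ) i)
          + (1 - lam * ∑ i, p i * (t0 i + c i * ℓ i)) •
            -(lam • ∑ i, (p i * c i) • ContinuousLinearMap.proj (R := ℝ) (φ := fun _ : Fin N => ℝ) i))) ℓ := by
      simpa only [pow_two] using (du.fun_mul du).const_mul 2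
    have dinv2 := (hasDerivAt_inv hden2).comp_hasFDerivAt ℓ dusq'
    have dh2 := dh.const_mul (lam ^ 2 * (p j * c j))
    have dterm2b := dh2.fun_mul dinv2
    have dPhi := (dexp.fun_sub (dterm2a.fun_add dterm2b)).sub_const (p j * c j)
    simp only [Function.comp] at dPhi
    simp only [div_eq_mul_inv]
    rw [dPhi.fderiv]
    simp only [ContinuousLinearMap.sub_apply, ContinuousLinearMap.add_apply,
      ContinuousLinearMap.smul_apply, eval_sum_proj, smul_eq_mul,
      ContinuousLinearMap.coe_smul', Pi.smul_apply, ContinuousLinearMap.neg_apply,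
      ContinuousLinearMap.coe_sub', Pi.sub_apply, ContinuousLinearMap.proj_apply,
      Pi.single_apply]
    rcases eq_or_ne k j with rfl | hkj
    · simp only [if_pos rfl]
      field_simp
      ring
    · simp only [if_neg hkj, if_neg (Ne.symm hkj)]
      field_simp
      ring
  rw [heq2, hD2, hH]
  -- common facts
  have htnn : ∀ i : Fin N, 0 ≤ t0 i + c i * ℓ i := by
    intro i; nlinarith [ht0 i, hc i, (hbox i).1]
  have htle : ∀ i : Fin N, t0 i + c i * ℓ i ≤ tmax i := by
    intro i; rw [htmax]; nlinarith [hc i, (hbox i).2]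
  have hSum2nn : 0 ≤ ∑ i, p i * (t0 i + c i * ℓ i) ^ 2 :=
    Finset.sum_nonneg fun i _ => mul_nonneg (hp i).le (sq_nonneg _)
  have hSum2le : (∑ i, p i * (t0 i + c i * ℓ i) ^ 2) ≤ ES2max := by
    rw [hES2max]
    apply Finset.sum_le_sum
    intro i _
    have := pow_le_pow_left₀ (htnn i) (htle i) 2
    nlinarith [hp i]
  have hexp1 : ∀ i : Fin N, Real.exp (-(b i) * ℓ i) ≤ 1 := by
    intro i
    rw [show (1:ℝ) = Real.exp 0 by simp]
    apply Real.exp_le_exp.mpr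
    nlinarith [hb i, (hbox i).1]
  have hpc : ∀ i : Fin N, (0:ℝ) ≤ p i * c i := fun i => (mul_pos (hp i) (hc i)).le
  have hpow2 : (1 - ρmax) ^ 2 ≤ (1 - lam * ∑ i, p i * (t0 i + c i * ℓ i)) ^ 2 :=
    pow_le_pow_left₀ h1ρ.le hu1 2
  have hpow3 : (1 - ρmax) ^ 3 ≤ (1 - lam * ∑ i, p i * (t0 i + c i * ℓ i)) ^ 3 :=
    pow_le_pow_left₀ h1ρ.le hu1 3
  have htmaxnn : ∀ i : Fin N, 0 ≤ tmax i := by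
    intro i; rw [htmax]; nlinarith [ht0 i, hc i]
  have hES2maxnn : 0 ≤ ES2max := by
    rw [hES2max]
    exact Finset.sum_nonneg fun i _ => mul_nonneg (hp i).le (sq_nonneg _)
  rcases eq_or_ne k j with rfl | hkj
  · simp only [eq_self_iff_true, if_true, one_mul, mul_one]
    have hT1 : 0 ≤ α * p k * A k * b k ^ 2 * Real.exp (-(b k) * ℓ k) :=
      mul_nonneg (mul_nonneg (mul_nonneg (mul_nonneg hα.le (hp k).le) (hA k).le)
        (sq_nonneg _)) (Real.exp_pos _).le
    have hT2 : 0 ≤ lam * p k * c k ^ 2 / (1 - lam * ∑ i, p i * (t0 i + c i * ℓ i)) :=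
      div_nonneg (mul_nonneg (mul_nonneg hlam.le (hp k).le) (sq_nonneg _)) huℓ'.le
    have hT3 : 0 ≤ lam ^ 2 * (p k * c k) * (p k * c k) *
        (t0 k + c k * ℓ k + (t0 k + c k * ℓ k)) /
        (1 - lam * ∑ i, p i * (t0 i + c i * ℓ i)) ^ 2 :=
      div_nonneg (mul_nonneg (mul_nonneg (mul_nonneg (sq_nonneg _) (hpc k)) (hpc k))
        (add_nonneg (htnn k) (htnn k))) (by positivity)
    have hT4 : 0 ≤ lam ^ 3 * (p k * c k) * (p k * c k) *
        (∑ i, p i * (t0 i + c i * ℓ i) ^ 2) /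
        (1 - lam * ∑ i, p i * (t0 i + c i * ℓ i)) ^ 3 :=
      div_nonneg (mul_nonneg (mul_nonneg (mul_nonneg (pow_nonneg hlam.le 3) (hpc k)) (hpc k))
        hSum2nn) (pow_nonneg huℓ'.le 3)
    rw [abs_neg, abs_of_nonneg (by linarith)]
    have e1 : lam * p k * c k ^ 2 / (1 - lam * ∑ i, p i * (t0 i + c i * ℓ i)) ≤
        lam * p k * c k ^ 2 / (1 - ρmax) :=
      div_le_div₀ (mul_nonneg (mul_nonneg hlam.le (hp k).le) (sq_nonneg _)) le_rfl h1ρ hu1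
    have e2 : lam ^ 2 * (p k * c k) * (p k * c k) *
        (t0 k + c k * ℓ k + (t0 k + c k * ℓ k)) /
        (1 - lam * ∑ i, p i * (t0 i + c i * ℓ i)) ^ 2 ≤
        lam ^ 2 * p k * c k * (p k * c k) * (tmax k + tmax k) / (1 - ρmax) ^ 2 := by
      apply div_le_div₀ _ _ (by positivity) hpow2
      · exact mul_nonneg (mul_nonneg (mul_nonneg (mul_nonneg (sq_nonneg _) (hp k).le)
          (hc k).le) (hpc k)) (add_nonneg (htmaxnn k) (htmaxnn k))
      · have h := mul_le_mul_of_nonneg_left (add_le_add (htle k) (htle k))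
          (mul_nonneg (mul_nonneg (sq_nonneg lam) (hpc k)) (hpc k))
        nlinarith [h]
    have e3 : lam ^ 3 * (p k * c k) * (p k * c k) *
        (∑ i, p i * (t0 i + c i * ℓ i) ^ 2) /
        (1 - lam * ∑ i, p i * (t0 i + c i * ℓ i)) ^ 3 ≤
        lam ^ 3 * p k * c k * (p k * c k) * ES2max / (1 - ρmax) ^ 3 := by
      apply div_le_div₀ _ _ (by positivity) hpow3
      · exact mul_nonneg (mul_nonneg (mul_nonneg (mul_nonneg (pow_nonneg hlam.le 3)
          (hp k).le) (hc k).le) (hpc k)) hES2maxnn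
      · have h := mul_le_mul_of_nonneg_left hSum2le
          (mul_nonneg (mul_nonneg (pow_nonneg hlam.le 3) (hpc k)) (hpc k))
        nlinarith [h]
    have e4 : α * p k * A k * b k ^ 2 * Real.exp (-(b k) * ℓ k) ≤
        α * p k * A k * b k ^ 2 :=
      mul_le_of_le_one_right (mul_nonneg (mul_nonneg (mul_nonneg hα.le (hp k).le)
        (hA k).le) (sq_nonneg _)) (hexp1 k)
    linarith [e1, e2, e3, e4]
  · simp only [if_neg hkj, mul_zero, zero_mul, zero_div, zero_add, add_zero]
    have hT3 : 0 ≤ lam ^ 2 * (p j * c j) * (p k * c k) *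
        (t0 j + c j * ℓ j + (t0 k + c k * ℓ k)) /
        (1 - lam * ∑ i, p i * (t0 i + c i * ℓ i)) ^ 2 :=
      div_nonneg (mul_nonneg (mul_nonneg (mul_nonneg (sq_nonneg _) (hpc j)) (hpc k))
        (add_nonneg (htnn j) (htnn k))) (by positivity)
    have hT4 : 0 ≤ lam ^ 3 * (p j * c j) * (p k * c k) *
        (∑ i, p i * (t0 i + c i * ℓ i) ^ 2) /
        (1 - lam * ∑ i, p i * (t0 i + c i * ℓ i)) ^ 3 :=
      div_nonneg (mul_nonneg (mul_nonneg (mul_nonneg (pow_nonneg hlam.le 3) (hpc j)) (hpc k))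
        hSum2nn) (pow_nonneg huℓ'.le 3)
    rw [abs_neg, abs_of_nonneg (by linarith)]
    have e2 : lam ^ 2 * (p j * c j) * (p k * c k) *
        (t0 j + c j * ℓ j + (t0 k + c k * ℓ k)) /
        (1 - lam * ∑ i, p i * (t0 i + c i * ℓ i)) ^ 2 ≤
        lam ^ 2 * p k * c k * (p j * c j) * (tmax k + tmax j) / (1 - ρmax) ^ 2 := by
      apply div_le_div₀ _ _ (by positivity) hpow2
      · exact mul_nonneg (mul_nonneg (mul_nonneg (mul_nonneg (sq_nonneg _) (hp k).le)
          (hc k).le) (hpc j)) (add_nonneg (htmaxnn k) (htmaxnn j))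
      · have h := mul_le_mul_of_nonneg_left (add_le_add (htle j) (htle k))
          (mul_nonneg (mul_nonneg (sq_nonneg lam) (hpc j)) (hpc k))
        nlinarith [h]
    have e3 : lam ^ 3 * (p j * c j) * (p k * c k) *
        (∑ i, p i * (t0 i + c i * ℓ i) ^ 2) /
        (1 - lam * ∑ i, p i * (t0 i + c i * ℓ i)) ^ 3 ≤
        lam ^ 3 * p k * c k * (p j * c j) * ES2max / (1 - ρmax) ^ 3 := by
      apply div_le_div₀ _ _ (by positivity) hpow3
      · exact mul_nonneg (mul_nonneg (mul_nonneg (mul_nonneg (pow_nonneg hlam.le 3)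
          (hp k).le) (hc k).le) (hpc j)) hES2maxnn
      · have h := mul_le_mul_of_nonneg_left hSum2le
          (mul_nonneg (mul_nonneg (pow_nonneg hlam.le 3) (hpc j)) (hpc k))
        nlinarith [h]
    linarith [e2, e3]
end

section
/- Along any sequence ℓ^{(n)} in the stability region with λE[S(ℓ^{(n)})] → 1⁻ (and E[S²(ℓ^{(n)})] bounded below by a positive constant), the objective J(ℓ^{(n)}) = α Σ_k π_k p_k(ℓ_k^{(n)}) − λE[S²(ℓ^{(n)})]/(2(1−λE[S(ℓ^{(n)})])) − E[S(ℓ^{(n)})] tends to −∞. In particular, the supremum of J over {ℓ ∈ [0,ℓ_max]^N : λE[S(ℓ)] < 1} is attained in the interior of the stability constraint (not on the boundary λE[S(ℓ)] = 1), so the stability multiplier γ in the KKT conditions is zero. -/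
open Finset Real Filter

/-- Along any sequence in the stability region with
`λE[S(ℓ⁽ⁿ⁾)] → 1⁻` (and `E[S²(ℓ⁽ⁿ⁾)]` bounded below by a positive constant),
the objective
`J(ℓ) = α Σ p_k p_k(ℓ_k) − λE[S²(ℓ)]/(2(1−λE[S(ℓ)])) − E[S(ℓ)]`
tends to `−∞`. -/
theorem stmt_16 (N : ℕ) (hN : 1 ≤ N) (lam α : ℝ) (hlam : 0 < lam) (hα : 0 < α)
    (p A D b c t0 : Fin N → ℝ)
    (hp : ∀ k, 0 < p k) (hpsum : ∑ k, p k = 1)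
    (hA : ∀ k, 0 < A k) (hAD : ∀ k, 0 < A k + D k ∧ A k + D k ≤ 1)
    (hD : ∀ k, 0 ≤ D k) (hb : ∀ k, 0 < b k)
    (hc : ∀ k, 0 < c k) (ht0 : ∀ k, 0 < t0 k)
    (pacc : Fin N → ℝ → ℝ)
    (hpacc : ∀ k x, pacc k x = A k * (1 - exp (-(b k) * x)) + D k)
    (t : Fin N → ℝ → ℝ) (ht : ∀ k x, t k x = t0 k + c k * x)
    (ES ES2 : (Fin N → ℝ) → ℝ)
    (hES : ∀ ℓ, ES ℓ = ∑ k, p k * t k (ℓ k))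
    (hES2 : ∀ ℓ, ES2 ℓ = ∑ k, p k * (t k (ℓ k)) ^ 2)
    (J : (Fin N → ℝ) → ℝ)
    (hJ : ∀ ℓ, J ℓ = α * ∑ k, p k * pacc k (ℓ k)
      - lam * ES2 ℓ / (2 * (1 - lam * ES ℓ)) - ES ℓ)
    (ℓseq : ℕ → Fin N → ℝ)
    (hpos : ∀ n k, 0 ≤ ℓseq n k)
    (hstab : ∀ n, lam * ES (ℓseq n) < 1)
    (hto1 : Tendsto (fun n => lam * ES (ℓseq n)) atTop (nhds 1))
    (ε : ℝ) (hε : 0 < ε) (hES2lb : ∀ n, ε ≤ ES2 (ℓseq n)) :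
    Tendsto (fun n => J (ℓseq n)) atTop atBot := by
  set δ : ℕ → ℝ := fun n => 1 - lam * ES (ℓseq n) with hδ
  have hδpos : ∀ n, 0 < δ n := fun n => by
    have := hstab n; simp only [hδ]; linarith
  have hδ0 : Tendsto δ atTop (nhds 0) := by
    have h := hto1.const_sub 1
    simpa using h
  have hδ0' : Tendsto δ atTop (nhdsWithin 0 (Set.Ioi 0)) :=
    tendsto_nhdsWithin_of_tendsto_nhds_of_eventually_within _ hδ0
      (Eventually.of_forall hδpos)
  have hinv : Tendsto (fun n => (δ n)⁻¹) atTop atTop :=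
    tendsto_inv_nhdsGT_zero.comp hδ0'
  have hmul : Tendsto (fun n => (lam * ε / 2) * (δ n)⁻¹) atTop atTop :=
    hinv.const_mul_atTop (by positivity)
  have hkey : Tendsto (fun n => α - (lam * ε / 2) * (δ n)⁻¹) atTop atBot := by
    have h2 : Tendsto (fun n => -((lam * ε / 2) * (δ n)⁻¹)) atTop atBot :=
      tendsto_neg_atTop_atBot.comp hmul
    simpa [sub_eq_add_neg] using tendsto_atBot_add_const_left atTop α h2
  refine tendsto_atBot_mono (fun n => ?_) hkey
  have hδn := hδpos n
  have hESnn : 0 ≤ ES (ℓseq n) := by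
    rw [hES]
    apply Finset.sum_nonneg
    intro k _
    have h1 : 0 ≤ t k (ℓseq n k) := by
      rw [ht]
      have := ht0 k; have := hc k; have := hpos n k
      nlinarith
    exact mul_nonneg (hp k).le h1
  have hsum1 : ∑ k, p k * pacc k (ℓseq n k) ≤ 1 := by
    calc ∑ k, p k * pacc k (ℓseq n k) ≤ ∑ k, p k * 1 := by
          apply Finset.sum_le_sum
          intro k _
          apply mul_le_mul_of_nonneg_left _ (hp k).le
          rw [hpacc]
          have he : 0 < exp (-(b k) * ℓseq n k) := exp_pos _
          have h2 := (hAD k).2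
          have h3 := (hA k).le
          nlinarith
      _ = 1 := by simp [hpsum]
  have heq : (lam * ε / 2) * (δ n)⁻¹ = lam * ε / (2 * δ n) := by
    field_simp
  have hfrac : lam * ε / (2 * δ n) ≤ lam * ES2 (ℓseq n) / (2 * δ n) := by
    gcongr
    exact hES2lb n
  have hαs : α * ∑ k, p k * pacc k (ℓseq n k) ≤ α := by
    nlinarith
  have hd : (1 : ℝ) - lam * ES (ℓseq n) = δ n := rfl
  rw [hJ, hd]
  linarith [heq ▸ hfrac]
end
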